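/- Let p ≥ 1 and α be positive integers, fix parameters r_0 = 1, r_1, …, r_{p+1} with r_{e−1} dividing r_e for each e, let 1 ≤ d ≤ p, and let α_d be the largest multiple of r_d that is strictly less than α. If v, w, x, y ∈ {0,1}^α satisfy π_{α_d}(v) ≠ π_{α_d}(w), x ≠ y and π_{α_d}(x) = π_{α_d}(y), then c_p(v,w) ≠ c_p(x,y). -/

import Mathlib

/-!
Coloring machinery of Conlon–Fox–Lee–Sudakov. Vectors in `{0,1}^α` are modelled as
`Bool` lists of length `α`. Fix block lengths `r 0 = 1, r 1, …` with `r d ∣ r (d+1)`.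
-/

/-- The blocks of resolution with block length `r`: split a vector into consecutive
blocks of length `r` (the last block may be shorter). -/
def blocksOf (r : ℕ) (v : List Bool) : List (List Bool) := v.toChunks r

/-- The function `η_d` (with `r = r_d`): records the position `i` of the first pair of
differing blocks of resolution `d` together with the unordered pair `{v_i, w_i}` of
these blocks; it takes the value `none` (playing the role of `0`) when `v = w`. -/
def eta (r : ℕ) (v w : List Bool) : Option (ℕ × Sym2 (List Bool)) :=
  (((blocksOf r v).zip (blocksOf r w)).zipIdx.map Prod.swap |>.find? (fun q => q.2.1 != q.2.2)).map
    (fun q => (q.1, s(q.2.1, q.2.2)))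

/-- The function `ξ_d`: apply `η_d` to each corresponding pair of blocks of
resolution `d+1`. -/
def xi (r : ℕ → ℕ) (d : ℕ) (v w : List Bool) : List (Option (ℕ × Sym2 (List Bool))) :=
  ((blocksOf (r (d+1)) v).zip (blocksOf (r (d+1)) w)).map fun q => eta (r d) q.1 q.2

/-- The type of colors used by the coloring `c_p`. -/
abbrev EGColor := List (List (Option (ℕ × Sym2 (List Bool))))

instance : DecidableEq (List (Option (ℕ × Sym2 (List Bool)))) := instDecidableEqList
instance : DecidableEq EGColor := instDecidableEqList

/-- The coloring `c_p (v,w) = (ξ_p(v,w), ξ_{p-1}(v,w), …, ξ_0(v,w))`. -/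
def cColor (r : ℕ → ℕ) (p : ℕ) (v w : List Bool) : EGColor :=
  (List.range (p+1)).map fun j => xi r (p - j) v w

/-- The set of colors appearing under `c_p` on (unordered) pairs of distinct
elements of `S`. -/
def colorsOn (r : ℕ → ℕ) (p : ℕ) (S : Finset (List Bool)) : Finset EGColor :=
  ((S ×ˢ S).filter fun q => q.1 ≠ q.2).image fun q => cColor r p q.1 q.2

/-- The vertex set `{0,1}^α`, realized as the set of all `Bool` lists of length `α`. -/
def allVecs (α : ℕ) : Finset (List Bool) :=
  Finset.univ.image fun v : Fin α → Bool => List.ofFn v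

/-- `alphaD rd α`: the largest multiple of `rd` that is strictly less than `α`
(for `α, rd ≥ 1`). -/
def alphaD (rd α : ℕ) : ℕ := rd * ((α - 1) / rd)

/-- The set `C_E^{(d)}` of emerging colors of `S` at resolution `d`: the unordered pairs
`{v'', w''}` of final segments of elements `v = (v', v'')`, `w = (w', w'')` of `S`
(split at `α_d`) with `v' = w'` and `v'' ≠ w''`. -/
def CEset (r : ℕ → ℕ) (α : ℕ) (S : Finset (List Bool)) (d : ℕ) : Finset (Sym2 (List Bool)) :=
  ((S ×ˢ S).filter fun q =>
      q.1.take (alphaD (r d) α) = q.2.take (alphaD (r d) α) ∧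
      q.1.drop (alphaD (r d) α) ≠ q.2.drop (alphaD (r d) α)).image
    fun q => s(q.1.drop (alphaD (r d) α), q.2.drop (alphaD (r d) α))

/-- The set `C_I^{(d)}` of inherited colors of `S` at resolution `d`: the pairs
`(c_p(v', w'), η_{d-1}(v'', w''))` over elements `v = (v', v'')`, `w = (w', w'')` of `S`
(split at `α_d`) with `v' ≠ w'`. -/
def CIset (r : ℕ → ℕ) (p α : ℕ) (S : Finset (List Bool)) (d : ℕ) :
    Finset (EGColor × Option (ℕ × Sym2 (List Bool))) :=
  ((S ×ˢ S).filter fun q =>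
      q.1.take (alphaD (r d) α) ≠ q.2.take (alphaD (r d) α)).image
    fun q => (cColor r p (q.1.take (alphaD (r d) α)) (q.2.take (alphaD (r d) α)),
              eta (r (d-1)) (q.1.drop (alphaD (r d) α)) (q.2.drop (alphaD (r d) α)))

/-! Equal colours have equal `ξ_d` components, and `ξ_d(a, b)` determines the index of the
block of resolution `d` containing the first coordinate where `a` and `b` differ. For `v, w`
that block ends by position `α_d`; for `x, y` it starts at or after `α_d`. -/

namespace List

theorem toChunks_go_eq {α : Type*} (n : ℕ) :
    ∀ (ys : List α) (acc₁ : Array α) (acc₂ : Array (List α)),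
      1 ≤ acc₁.size → acc₁.size ≤ n + 1 →
      toChunks.go (n + 1) ys acc₁ acc₂ =
        acc₂.toList ++ (acc₁.toList ++ ys.take (n + 1 - acc₁.size)) ::
          toChunks (n + 1) (ys.drop (n + 1 - acc₁.size))
  | [], acc₁, acc₂, _, _ => by simp [toChunks.go, toChunks]
  | y :: ys, acc₁, acc₂, h₁, h₂ => by
      rw [toChunks.go]
      rcases h₂.eq_or_lt with hfull | hlt
      · have hy :
            toChunks (n + 1) (y :: ys) = (y :: ys.take n) :: toChunks (n + 1) (ys.drop n) := by
          change toChunks.go (n + 1) ys #[y] #[] = _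
          rw [toChunks_go_eq n ys #[y] #[] (by simp) (by simp)]
          simp
        rw [if_pos (by simpa using hfull),
          toChunks_go_eq n ys _ _ (by simp) (by simp), hfull, Nat.sub_self, take_zero, drop_zero,
          hy]
        simp
      · rw [if_neg (by simp; omega), toChunks_go_eq n ys _ _ (by simp) (by simp; omega),
          show n + 1 - acc₁.size = n + 1 - (acc₁.size + 1) + 1 by omega]
        simp
  termination_by ys => ys.length

theorem toChunks_eq_cons {α : Type*} {s : ℕ} (hs : 0 < s) {l : List α} (hl : l ≠ []) :
    l.toChunks s = l.take s :: (l.drop s).toChunks s := by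
  obtain ⟨n, rfl⟩ := Nat.exists_eq_add_one.2 hs
  obtain ⟨x, xs, rfl⟩ := exists_cons_of_ne_nil hl
  change toChunks.go (n + 1) xs #[x] #[] = _
  rw [toChunks_go_eq n xs #[x] #[] (by simp) (by simp)]
  simp

theorem find?_map_swap_zipIdx_cons {α : Type*} (p : α → Bool) (x : α) (l : List α) :
    (((x :: l).zipIdx.map Prod.swap).find? fun q => p q.2) =
      if p x then some (0, x)
      else (((l.zipIdx.map Prod.swap).find? fun q => p q.2).map (Prod.map (· + 1) id)) := by
  rw [zipIdx_cons, zipIdx_succ]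
  cases h : p x <;> simp [find?_map, Function.comp_def, h]; rfl

end List

def IsFirstDiff {α : Type*} (a b : List α) (f : ℕ) : Prop :=
  a.take f = b.take f ∧ a[f]? ≠ b[f]?

namespace IsFirstDiff

variable {α : Type*} {a b : List α} {f n : ℕ}

theorem take_eq_of_le (h : IsFirstDiff a b f) (hn : n ≤ f) : a.take n = b.take n := by
  simpa [List.take_take, hn] using congrArg (List.take n) h.1

theorem take_ne_of_lt (h : IsFirstDiff a b f) (hn : f < n) : a.take n ≠ b.take n := by
  intro heq
  apply h.2
  simpa [List.getElem?_take, hn] using congrArg (·[f]?) heq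

theorem take (h : IsFirstDiff a b f) (hn : f < n) : IsFirstDiff (a.take n) (b.take n) f := by
  refine ⟨?_, by simpa [List.getElem?_take, hn] using h.2⟩
  rw [List.take_take, List.take_take, min_eq_left hn.le, h.1]

theorem drop (h : IsFirstDiff a b f) (hn : n ≤ f) :
    IsFirstDiff (a.drop n) (b.drop n) (f - n) := by
  refine ⟨?_, ?_⟩
  · rw [List.take_drop, List.take_drop, Nat.add_sub_cancel' hn, h.1]
  · rw [List.getElem?_drop, List.getElem?_drop, Nat.add_sub_cancel' hn]
    exact h.2

theorem lt_length (h : IsFirstDiff a b f) (hlen : a.length = b.length) : f < a.length := by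
  by_contra hf
  exact h.2 (by rw [List.getElem?_eq_none (by omega), List.getElem?_eq_none (by omega)])

end IsFirstDiff

theorem exists_isFirstDiff_lt_of_take_ne {α : Type*} {a b : List α} {n : ℕ}
    (h : a.take n ≠ b.take n) : ∃ f < n, IsFirstDiff a b f := by
  classical
  have hex : ∃ i, i < n ∧ a[i]? ≠ b[i]? := by
    by_contra! hall
    exact h (List.ext_getElem? fun i => by
      by_cases hi : i < n
      · simp [hi, hall i hi]
      · simp [hi])
  refine ⟨Nat.find hex, (Nat.find_spec hex).1, List.ext_getElem? fun i => ?_,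
    (Nat.find_spec hex).2⟩
  by_cases hi : i < Nat.find hex
  · have hmin := Nat.find_min hex hi
    simp only [List.getElem?_take, hi, if_true]
    by_contra hne
    exact hmin ⟨hi.trans (Nat.find_spec hex).1, hne⟩
  · simp [hi]

theorem eta_self (s : ℕ) (u : List Bool) : eta s u u = none := by
  simp only [eta, List.zip_eq_zipWith, List.zipWith_self, Option.map_eq_none_iff,
    List.find?_eq_none]
  intro q hq
  obtain ⟨⟨_, _⟩, hmem, rfl⟩ := List.mem_map.1 hq
  obtain ⟨c, -, hc⟩ := List.mem_map.1 (List.fst_mem_of_mem_zipIdx hmem)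
  cases hc
  simp

theorem eta_eq_of_ne_nil {s : ℕ} (hs : 0 < s) {a b : List Bool} (ha : a ≠ []) (hb : b ≠ []) :
    eta s a b =
      if a.take s = b.take s then (eta s (a.drop s) (b.drop s)).map (Prod.map (· + 1) id)
      else some (0, s(a.take s, b.take s)) := by
  unfold eta blocksOf
  rw [List.toChunks_eq_cons hs ha, List.toChunks_eq_cons hs hb, List.zip_cons_cons,
    List.find?_map_swap_zipIdx_cons (fun z : List Bool × List Bool => z.1 != z.2)]
  by_cases h : a.take s = b.take s <;> simp [h, Option.map_map, Function.comp_def]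

theorem IsFirstDiff.eta_eq {s : ℕ} (hs : 0 < s) {a b : List Bool} {f : ℕ}
    (h : IsFirstDiff a b f) (hlen : a.length = b.length) :
    ∃ e, eta s a b = some (f / s, e) := by
  induction f using Nat.strong_induction_on generalizing a b with
  | _ f ih =>
    have hf := h.lt_length hlen
    rw [eta_eq_of_ne_nil hs (List.ne_nil_of_length_pos (by omega))
      (List.ne_nil_of_length_pos (by omega))]
    rcases lt_or_ge f s with hfs | hsf
    · exact ⟨_, by rw [if_neg (h.take_ne_of_lt hfs), Nat.div_eq_of_lt hfs]⟩
    · obtain ⟨e, he⟩ := ih (f - s) (by omega) (h.drop hsf) (by simp [hlen])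
      refine ⟨e, ?_⟩
      rw [if_pos (h.take_eq_of_le hsf), he, Nat.div_eq_sub_div hs hsf]
      rfl

theorem xi_eq_cons (r : ℕ → ℕ) (d : ℕ) (hR : 0 < r (d + 1)) {a b : List Bool}
    (ha : a ≠ []) (hb : b ≠ []) :
    xi r d a b = eta (r d) (a.take (r (d + 1))) (b.take (r (d + 1))) ::
      xi r d (a.drop (r (d + 1))) (b.drop (r (d + 1))) := by
  unfold xi blocksOf
  rw [List.toChunks_eq_cons hR ha, List.toChunks_eq_cons hR hb, List.zip_cons_cons, List.map_cons]

/-- `ξ_d` records the index of a differing block only relative to its enclosing block of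
resolution `d + 1`; given `q = r (d + 1) / r d`, this recovers its absolute index. -/
def xiBlockIndex (q : ℕ) : List (Option (ℕ × Sym2 (List Bool))) → Option ℕ
  | [] => none
  | none :: t => (xiBlockIndex q t).map (· + q)
  | some (j, _) :: _ => some j

theorem IsFirstDiff.xiBlockIndex_xi {r : ℕ → ℕ} {d : ℕ} (hs : 0 < r d) (hR : 0 < r (d + 1))
    (hdvd : r d ∣ r (d + 1)) {a b : List Bool} {f : ℕ} (h : IsFirstDiff a b f)
    (hlen : a.length = b.length) :
    xiBlockIndex (r (d + 1) / r d) (xi r d a b) = some (f / r d) := by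
  induction f using Nat.strong_induction_on generalizing a b with
  | _ f ih =>
    have hf := h.lt_length hlen
    rw [xi_eq_cons r d hR (List.ne_nil_of_length_pos (by omega))
      (List.ne_nil_of_length_pos (by omega))]
    rcases lt_or_ge f (r (d + 1)) with hfR | hRf
    · obtain ⟨e, he⟩ := (h.take hfR).eta_eq hs (by simp [hlen])
      rw [he]
      rfl
    · rw [h.take_eq_of_le hRf, eta_self]
      change (xiBlockIndex _ (xi r d _ _)).map _ = _
      rw [ih (f - r (d + 1)) (by omega) (h.drop hRf) (by simp [hlen]), Option.map_some]
      obtain ⟨k, hk⟩ := hdvd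
      have hsplit : f = f - r (d + 1) + r d * k := by omega
      rw [congrArg (· / r d) hsplit, hk, Nat.mul_div_cancel_left k hs, Nat.add_mul_div_left _ _ hs]

theorem xi_eq_of_cColor_eq {r : ℕ → ℕ} {p d : ℕ} (hdp : d ≤ p) {v w x y : List Bool}
    (h : cColor r p v w = cColor r p x y) : xi r d v w = xi r d x y := by
  have h' := congrArg (·[p - d]?) h
  simpa [cColor, List.getElem?_range (show p - d < p + 1 by omega), Nat.sub_sub_self hdp] using h'

theorem stmt11_general (p α : ℕ) (r : ℕ → ℕ)
    (hrpos : ∀ e ≤ p + 1, 0 < r e) (hrdvd : ∀ e < p + 1, r e ∣ r (e + 1))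
    (d : ℕ) (hdp : d ≤ p)
    (v w x y : List Bool) (hv : v.length = α) (hw : w.length = α)
    (hx : x.length = α) (hy : y.length = α)
    (h1 : v.take (alphaD (r d) α) ≠ w.take (alphaD (r d) α))
    (h2 : x ≠ y) (h3 : x.take (alphaD (r d) α) = y.take (alphaD (r d) α)) :
    cColor r p v w ≠ cColor r p x y := by
  intro hc
  have hs : 0 < r d := hrpos d (by omega)
  have hR : 0 < r (d + 1) := hrpos (d + 1) (by omega)
  have hdvd : r d ∣ r (d + 1) := hrdvd d (by omega)
  obtain ⟨f₁, hf₁, hvw⟩ := exists_isFirstDiff_lt_of_take_ne h1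
  obtain ⟨f₂, -, hxy⟩ := exists_isFirstDiff_lt_of_take_ne (a := x) (b := y) (n := α)
    (by rwa [List.take_of_length_le hx.le, List.take_of_length_le hy.le])
  have hf₂ : alphaD (r d) α ≤ f₂ := not_lt.1 fun hlt => hxy.take_ne_of_lt hlt h3
  have hblock : f₁ / r d = f₂ / r d := Option.some_injective _ <| by
    rw [← hvw.xiBlockIndex_xi hs hR hdvd (hv.trans hw.symm), xi_eq_of_cColor_eq hdp hc,
      hxy.xiBlockIndex_xi hs hR hdvd (hx.trans hy.symm)]
  have hlt : f₁ / r d < (α - 1) / r d := Nat.div_lt_of_lt_mul hf₁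
  have hle : (α - 1) / r d ≤ f₂ / r d :=
    (Nat.mul_div_cancel_left _ hs).ge.trans (Nat.div_le_div_right hf₂)
  omega

/-- For `1 ≤ d ≤ p`, with `α_d = alphaD (r d) α` the largest multiple of `r d` strictly
less than `α`: if `π_{α_d}(v) ≠ π_{α_d}(w)`, `x ≠ y` and `π_{α_d}(x) = π_{α_d}(y)`, then
`c_p(v, w) ≠ c_p(x, y)` (inherited and emerging colors are distinct). -/
theorem stmt11 (p α : ℕ) (hp : 1 ≤ p) (hα : 1 ≤ α) (r : ℕ → ℕ) (hr0 : r 0 = 1)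
    (hrpos : ∀ e ≤ p + 1, 0 < r e) (hrdvd : ∀ e < p + 1, r e ∣ r (e + 1))
    (d : ℕ) (hd : 1 ≤ d) (hdp : d ≤ p)
    (v w x y : List Bool) (hv : v.length = α) (hw : w.length = α)
    (hx : x.length = α) (hy : y.length = α)
    (h1 : v.take (alphaD (r d) α) ≠ w.take (alphaD (r d) α))
    (h2 : x ≠ y) (h3 : x.take (alphaD (r d) α) = y.take (alphaD (r d) α)) :
    cColor r p v w ≠ cColor r p x y :=
  stmt11_general p α r hrpos hrdvd d hdp v w x y hv hw hx hy h1 h2 h3
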